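/- arXiv:1506.07701 — 5 statements merged into one kernel-verified Lean document; each statement's English description precedes it below -/
import Mathlib

section
/- Let ρ_θ^j = e^{-iθ(n·σ)/2} ρ_0^j e^{iθ(n·σ)/2} (j=1,2) be two single-qubit shift-parameter models with Bloch vectors s₁, s₂ (both of norm < 1), and let g^j be their SLD Fisher informations and g^λ the SLD Fisher information of λρ_θ¹ + (1−λ)ρ_θ² for λ ∈ (0,1). Then λg¹ + (1−λ)g² − g^λ = λ(1−λ)|n × (s₁ − s₂)|². In particular, equality in the convexity inequality holds if and only if s₁ − s₂ is parallel to n. -/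
open Matrix Kronecker
noncomputable section

/-- Pauli X matrix. -/
def σx : Matrix (Fin 2) (Fin 2) ℂ := !![0, 1; 1, 0]
/-- Pauli Y matrix. -/
def σy : Matrix (Fin 2) (Fin 2) ℂ := !![0, -Complex.I; Complex.I, 0]
/-- Pauli Z matrix. -/
def σz : Matrix (Fin 2) (Fin 2) ℂ := !![1, 0; 0, -1]

/-- `v · σ` for a real 3-vector `v`. -/
def dotσ (v : Fin 3 → ℝ) : Matrix (Fin 2) (Fin 2) ℂ :=
  (v 0 : ℂ) • σx + (v 1 : ℂ) • σy + (v 2 : ℂ) • σz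

/-- Qubit state with Bloch vector `s`: `(I + s·σ)/2`. -/
def bloch (s : Fin 3 → ℝ) : Matrix (Fin 2) (Fin 2) ℂ := (1 / 2 : ℂ) • (1 + dotσ s)


/-!
For 2×2 matrices the anticommutator `ρL + Lρ` is determined by `L`, `ρ` and traces (polarised
Cayley–Hamilton). Hence if `Tr ρ = 1` and the derivative `ρ'` satisfies `Tr ρ' = Tr (ρ ρ') = 0`,
the SLD equation forces `L = 2ρ' + Tr L • (1 - ρ)`, and so `Tr (L ρ') = 2 Tr (ρ'²)`.
For a shift model `ρ_θ = e^{θm} B e^{-θm}` with `m = -(i/2) n·σ` we have `ρ' = ⁅m, ρ_θ⁆`, which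
satisfies both trace conditions, so the Fisher information is the quadratic form
`B ↦ 2 Tr (⁅m, B⁆²)` of the initial state. The convexity defect of a quadratic form `q` is
`λ(1-λ) q(B₁ - B₂)`, and the Pauli relation `⁅u·σ, v·σ⁆ = 2i (u × v)·σ` evaluates it.
-/

namespace Matrix

variable {ι R : Type*} [Fintype ι] [CommRing R]

theorem mul_add_mul_fin_two (X Y : Matrix (Fin 2) (Fin 2) R) :
    X * Y + Y * X = X.trace • Y + Y.trace • X + ((X * Y).trace - X.trace * Y.trace) • 1 := by
  ext i j
  fin_cases i <;> fin_cases j <;>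
    simp [trace_fin_two, mul_apply, Fin.sum_univ_two] <;> ring

theorem trace_lie (A B : Matrix ι ι R) : trace ⁅A, B⁆ = 0 := by
  rw [Ring.lie_def, trace_sub, trace_mul_comm, sub_self]

theorem trace_mul_lie_self (A B : Matrix ι ι R) : trace (B * ⁅A, B⁆) = 0 := by
  rw [Ring.lie_def, mul_sub, trace_sub, ← Matrix.mul_assoc, trace_mul_comm (B * A), sub_self]

theorem trace_conj_mul_conj [DecidableEq ι] {U V : Matrix ι ι R} (h : V * U = 1)
    (X Y : Matrix ι ι R) : (U * X * V * (U * Y * V)).trace = (X * Y).trace := by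
  have hconj : U * X * V * (U * Y * V) = U * (X * Y) * V := by
    simp only [Matrix.mul_assoc, ← Matrix.mul_assoc V U, h, Matrix.one_mul]
  rw [hconj, trace_mul_cycle, h, Matrix.one_mul]

theorem trace_lie_mul_self_convexity_defect (m B₁ B₂ : Matrix ι ι R) (a : R) :
    a * (⁅m, B₁⁆ * ⁅m, B₁⁆).trace + (1 - a) * (⁅m, B₂⁆ * ⁅m, B₂⁆).trace
        - (⁅m, a • B₁ + (1 - a) • B₂⁆ * ⁅m, a • B₁ + (1 - a) • B₂⁆).trace
      = a * (1 - a) * (⁅m, B₁ - B₂⁆ * ⁅m, B₁ - B₂⁆).trace := by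
  have hlin : ⁅m, a • B₁ + (1 - a) • B₂⁆ = a • ⁅m, B₁⁆ + (1 - a) • ⁅m, B₂⁆ := by
    simp only [Ring.lie_def, Matrix.mul_add, Matrix.add_mul, Matrix.mul_smul, Matrix.smul_mul]
    module
  have hsub : ⁅m, B₁ - B₂⁆ = ⁅m, B₁⁆ - ⁅m, B₂⁆ := by
    simp only [Ring.lie_def, Matrix.mul_sub, Matrix.sub_mul]
    abel
  rw [hlin, hsub]
  simp only [Matrix.add_mul, Matrix.mul_add, Matrix.sub_mul, Matrix.mul_sub, Matrix.smul_mul,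
    Matrix.mul_smul, trace_add, trace_sub, trace_smul, smul_eq_mul, trace_mul_comm ⁅m, B₂⁆]
  ring

end Matrix

theorem lie_mul_mul_of_commute {A : Type*} [Ring A] {m U V : A} (hU : Commute m U)
    (hV : Commute m V) (B : A) : ⁅m, U * B * V⁆ = U * ⁅m, B⁆ * V := by
  rw [Ring.lie_def, Ring.lie_def, ← mul_assoc, ← mul_assoc, hU.eq, mul_assoc (U * B) V m, ← hV.eq]
  noncomm_ring

section SLD

variable {K : Type*} [Field K] [NeZero (2 : K)] {ρ L ρ' : Matrix (Fin 2) (Fin 2) K}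

theorem sld_eq_of_trace_eq_zero (hρ : ρ.trace = 1) (hSLD : ρ' = (1 / 2 : K) • (ρ * L + L * ρ))
    (hρ' : ρ'.trace = 0) : L = (2 : K) • ρ' + L.trace • (1 - ρ) := by
  have h2ρ' : (2 : K) • ρ' = ρ * L + L * ρ := by
    rw [hSLD, smul_smul, mul_one_div_cancel (NeZero.ne 2), one_smul]
  have hρL : (ρ * L).trace = 0 := by
    have h := congrArg trace h2ρ'
    rw [trace_smul, hρ', smul_zero, trace_add, trace_mul_comm L] at h
    exact (mul_eq_zero.mp (h.trans (two_mul _).symm).symm).resolve_left (NeZero.ne 2)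
  rw [mul_add_mul_fin_two, hρ, hρL, one_smul] at h2ρ'
  rw [h2ρ']
  module

theorem trace_sld_mul_eq_two_trace_sq (hρ : ρ.trace = 1) (hSLD : ρ' = (1 / 2 : K) • (ρ * L + L * ρ))
    (hρ' : ρ'.trace = 0) (hρρ' : (ρ * ρ').trace = 0) : (L * ρ').trace = 2 * (ρ' * ρ').trace := by
  rw [sld_eq_of_trace_eq_zero hρ hSLD hρ', add_mul, smul_mul, smul_mul, sub_mul, one_mul,
    trace_add, trace_smul, trace_smul, trace_sub, hρ', hρρ', sub_zero, smul_zero, add_zero,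
    smul_eq_mul]

end SLD

section ShiftModel

open NormedSpace

theorem hasDerivAt_exp_conj {𝔸 : Type*} [NormedRing 𝔸] [NormedAlgebra ℂ 𝔸] [CompleteSpace 𝔸]
    (m B : 𝔸) (θ : ℝ) :
    HasDerivAt (fun t : ℝ => exp ((t : ℂ) • m) * B * exp ((-(t : ℂ)) • m))
      ⁅m, exp ((θ : ℂ) • m) * B * exp ((-(θ : ℂ)) • m)⁆ θ := by
  have hU := hasDerivAt_exp_smul_const m (θ : ℂ)
  have hV : HasDerivAt (fun z : ℂ => exp ((-z) • m)) (exp ((-(θ : ℂ)) • m) * -m) (θ : ℂ) := by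
    simpa only [smul_neg, neg_smul] using hasDerivAt_exp_smul_const (-m) (θ : ℂ)
  refine (((hU.mul_const B).mul hV).scomp θ Complex.ofRealCLM.hasDerivAt).congr_deriv ?_
  rw [Complex.ofRealCLM_apply, Complex.ofReal_one, one_smul, Ring.lie_def,
    ← (((Commute.refl m).smul_right (θ : ℂ)).exp_right).eq]
  noncomm_ring

variable {ι : Type*} [Fintype ι] [DecidableEq ι]

section

-- Any matrix norm would do: it only serves to differentiate `exp`, and the statement is norm-free.
attribute [local instance] Matrix.linftyOpNormedAddCommGroup Matrix.linftyOpNormedRing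
  Matrix.linftyOpNormedAlgebra

theorem hasDerivAt_exp_conj_apply (m B : Matrix ι ι ℂ) (θ : ℝ) (i j : ι) :
    HasDerivAt (fun t : ℝ => (exp ((t : ℂ) • m) * B * exp ((-(t : ℂ)) • m)) i j)
      (⁅m, exp ((θ : ℂ) • m) * B * exp ((-(θ : ℂ)) • m)⁆ i j) θ := by
  let entry : Matrix ι ι ℂ →L[ℝ] ℂ := LinearMap.toContinuousLinearMap (entryLinearMap ℝ ℂ i j)
  exact entry.hasFDerivAt.comp_hasDerivAt θ (hasDerivAt_exp_conj m B θ)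

end

theorem eq_lie_of_hasDerivAt_exp_conj {ρ : ℝ → Matrix ι ι ℂ} {m B ρ' : Matrix ι ι ℂ} {θ : ℝ}
    (hρ : ∀ t : ℝ, ρ t = exp ((t : ℂ) • m) * B * exp ((-(t : ℂ)) • m))
    (hρ' : ∀ i j, HasDerivAt (fun t => ρ t i j) (ρ' i j) θ) : ρ' = ⁅m, ρ θ⁆ := by
  obtain rfl : ρ = _ := funext hρ
  ext i j
  exact (hρ' i j).unique (hasDerivAt_exp_conj_apply m B θ i j)

theorem exp_neg_smul_mul_exp_smul (m : Matrix ι ι ℂ) (z : ℂ) :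
    exp ((-z) • m) * exp (z • m) = 1 := by
  rw [← Matrix.exp_add_of_commute _ _ (((Commute.refl m).smul_left _).smul_right _), neg_smul,
    neg_add_cancel, exp_zero]

theorem sld_fisher_of_exp_conj {ρ : ℝ → Matrix (Fin 2) (Fin 2) ℂ}
    {m B ρ' L : Matrix (Fin 2) (Fin 2) ℂ} {θ : ℝ} (hB : B.trace = 1)
    (hρ : ∀ t : ℝ, ρ t = exp ((t : ℂ) • m) * B * exp ((-(t : ℂ)) • m))
    (hρ' : ∀ i j, HasDerivAt (fun t => ρ t i j) (ρ' i j) θ)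
    (hSLD : ρ' = (1 / 2 : ℂ) • (ρ θ * L + L * ρ θ)) :
    (L * ρ').trace = 2 * (⁅m, B⁆ * ⁅m, B⁆).trace := by
  have hVU := exp_neg_smul_mul_exp_smul m θ
  have hcomm (z : ℂ) : Commute m (exp (z • m)) := ((Commute.refl m).smul_right z).exp_right
  have hder := eq_lie_of_hasDerivAt_exp_conj hρ hρ'
  have htr : (ρ θ).trace = 1 := by rw [hρ, trace_mul_cycle, hVU, Matrix.one_mul, hB]
  rw [trace_sld_mul_eq_two_trace_sq htr hSLD (hder ▸ trace_lie _ _) (hder ▸ trace_mul_lie_self _ _), hder, hρ,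
    lie_mul_mul_of_commute (hcomm _) (hcomm _), trace_conj_mul_conj hVU]

end ShiftModel

theorem trace_bloch (s : Fin 3 → ℝ) : (bloch s).trace = 1 := by
  simp [bloch, dotσ, σx, σy, σz, trace_fin_two]

theorem dotσ_lie_dotσ (u v : Fin 3 → ℝ) : ⁅dotσ u, dotσ v⁆ = (2 * Complex.I) • dotσ (u ⨯₃ v) := by
  rw [Ring.lie_def]
  ext i j
  fin_cases i <;> fin_cases j <;>
    simp [dotσ, σx, σy, σz, cross_apply] <;> grind [Complex.I_sq]

theorem bloch_sub_bloch (s₁ s₂ : Fin 3 → ℝ) :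
    bloch s₁ - bloch s₂ = (1 / 2 : ℂ) • dotσ (s₁ - s₂) := by
  simp only [bloch, dotσ, Pi.sub_apply, Complex.ofReal_sub, sub_smul]
  module

theorem trace_dotσ_mul_self (w : Fin 3 → ℝ) :
    (dotσ w * dotσ w).trace = 2 * ((∑ i, w i ^ 2 : ℝ) : ℂ) := by
  simp [dotσ, σx, σy, σz, trace_fin_two, Fin.sum_univ_three]
  linear_combination (-2 * (w 1 : ℂ) ^ 2) * Complex.I_sq

theorem trace_lie_bloch_sub_mul_self (n s₁ s₂ : Fin 3 → ℝ) :
    (⁅(-Complex.I / 2) • dotσ n, bloch s₁ - bloch s₂⁆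
        * ⁅(-Complex.I / 2) • dotσ n, bloch s₁ - bloch s₂⁆).trace
      = ((∑ i, (n ⨯₃ (s₁ - s₂)) i ^ 2 : ℝ) : ℂ) / 2 := by
  have hlie : ⁅(-Complex.I / 2) • dotσ n, bloch s₁ - bloch s₂⁆
      = (1 / 2 : ℂ) • dotσ (n ⨯₃ (s₁ - s₂)) :=
    calc ⁅(-Complex.I / 2) • dotσ n, bloch s₁ - bloch s₂⁆
        = (-Complex.I / 2 * (1 / 2)) • ⁅dotσ n, dotσ (s₁ - s₂)⁆ := by
          simp only [bloch_sub_bloch, Ring.lie_def, Matrix.smul_mul, Matrix.mul_smul, smul_smul,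
            smul_sub, mul_comm (1 / 2 : ℂ)]
      _ = (1 / 2 : ℂ) • dotσ (n ⨯₃ (s₁ - s₂)) := by
          rw [dotσ_lie_dotσ, smul_smul]
          congr 1
          linear_combination (-1 / 2 : ℂ) * Complex.I_sq
  rw [hlie, Matrix.smul_mul, Matrix.mul_smul, smul_smul, trace_smul, trace_dotσ_mul_self,
    smul_eq_mul]
  ring

theorem exp_smul_dotσ_conj (n : Fin 3 → ℝ) (B : Matrix (Fin 2) (Fin 2) ℂ) (t : ℝ) :
    NormedSpace.exp ((-(Complex.I * (t : ℂ)) / 2) • dotσ n) * B *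
        NormedSpace.exp (((Complex.I * (t : ℂ)) / 2) • dotσ n)
      = NormedSpace.exp ((t : ℂ) • (-Complex.I / 2) • dotσ n) * B *
        NormedSpace.exp ((-(t : ℂ)) • (-Complex.I / 2) • dotσ n) := by
  simp only [smul_smul]
  ring_nf

theorem sum_sq_cross_eq_zero_iff {n d : Fin 3 → ℝ} (hn : ∑ i, n i ^ 2 = 1) :
    ∑ i, (n ⨯₃ d) i ^ 2 = 0 ↔ ∃ c : ℝ, d = c • n := by
  have hnn : n ⬝ᵥ n = 1 := by simpa [dotProduct, sq] using hn
  have hsum : ∑ i, (n ⨯₃ d) i ^ 2 = (n ⨯₃ d) ⬝ᵥ (n ⨯₃ d) := by simp [dotProduct, sq]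
  rw [hsum, dotProduct_self_eq_zero]
  constructor
  · intro hcross
    have htriple := cross_cross_eq_smul_sub_smul' n n d
    rw [hcross, map_zero, hnn, one_smul] at htriple
    exact ⟨n ⬝ᵥ d, (sub_eq_zero.mp htriple.symm).symm⟩
  · rintro ⟨c, rfl⟩
    rw [map_smul, cross_self, smul_zero]

theorem sld_fisher_convexity_defect_qubit_general
    (n s₁ s₂ : Fin 3 → ℝ) (hn : ∑ i, n i ^ 2 = 1)
    (lam : ℝ) (hlam : lam ∈ Set.Ioo (0 : ℝ) 1)
    (ρ₁ ρ₂ ρmix : ℝ → Matrix (Fin 2) (Fin 2) ℂ)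
    (hρ₁ : ∀ t : ℝ, ρ₁ t =
      NormedSpace.exp ((-(Complex.I * (t : ℂ)) / 2) • dotσ n) * bloch s₁ *
      NormedSpace.exp (((Complex.I * (t : ℂ)) / 2) • dotσ n))
    (hρ₂ : ∀ t : ℝ, ρ₂ t =
      NormedSpace.exp ((-(Complex.I * (t : ℂ)) / 2) • dotσ n) * bloch s₂ *
      NormedSpace.exp (((Complex.I * (t : ℂ)) / 2) • dotσ n))
    (hmix : ∀ t : ℝ, ρmix t = (lam : ℂ) • ρ₁ t + ((1 - lam : ℝ) : ℂ) • ρ₂ t)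
    (θ : ℝ) (ρ₁' ρ₂' ρmix' : Matrix (Fin 2) (Fin 2) ℂ)
    (hρ₁' : ∀ i j, HasDerivAt (fun t => ρ₁ t i j) (ρ₁' i j) θ)
    (hρ₂' : ∀ i j, HasDerivAt (fun t => ρ₂ t i j) (ρ₂' i j) θ)
    (hρmix' : ∀ i j, HasDerivAt (fun t => ρmix t i j) (ρmix' i j) θ)
    (L₁ L₂ Lmix : Matrix (Fin 2) (Fin 2) ℂ)
    (hSLD₁ : ρ₁' = (1 / 2 : ℂ) • (ρ₁ θ * L₁ + L₁ * ρ₁ θ))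
    (hSLD₂ : ρ₂' = (1 / 2 : ℂ) • (ρ₂ θ * L₂ + L₂ * ρ₂ θ))
    (hSLDmix : ρmix' = (1 / 2 : ℂ) • (ρmix θ * Lmix + Lmix * ρmix θ)) :
    lam * ((L₁ * ρ₁').trace).re + (1 - lam) * ((L₂ * ρ₂').trace).re
        - ((Lmix * ρmix').trace).re
      = lam * (1 - lam) * ∑ i, (crossProduct n (s₁ - s₂)) i ^ 2 ∧
    (lam * ((L₁ * ρ₁').trace).re + (1 - lam) * ((L₂ * ρ₂').trace).re
        = ((Lmix * ρmix').trace).re ↔ ∃ c : ℝ, s₁ - s₂ = c • n) := by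
  set m := (-Complex.I / 2) • dotσ n
  set B := (lam : ℂ) • bloch s₁ + (1 - (lam : ℂ)) • bloch s₂
  have hshift₁ (t : ℝ) :
      ρ₁ t = NormedSpace.exp ((t : ℂ) • m) * bloch s₁ * NormedSpace.exp ((-(t : ℂ)) • m) :=
    (hρ₁ t).trans (exp_smul_dotσ_conj n _ t)
  have hshift₂ (t : ℝ) :
      ρ₂ t = NormedSpace.exp ((t : ℂ) • m) * bloch s₂ * NormedSpace.exp ((-(t : ℂ)) • m) :=
    (hρ₂ t).trans (exp_smul_dotσ_conj n _ t)
  have hshiftmix (t : ℝ) :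
      ρmix t = NormedSpace.exp ((t : ℂ) • m) * B * NormedSpace.exp ((-(t : ℂ)) • m) := by
    rw [hmix, hshift₁, hshift₂, Complex.ofReal_sub, Complex.ofReal_one]
    simp only [B, Matrix.mul_add, Matrix.add_mul, Matrix.mul_smul, Matrix.smul_mul]
  have hB : B.trace = 1 := by simp [B, trace_bloch]
  have hdefect : (lam : ℂ) * (L₁ * ρ₁').trace + ((1 - lam : ℝ) : ℂ) * (L₂ * ρ₂').trace
      - (Lmix * ρmix').trace = ((lam * (1 - lam) * ∑ i, (n ⨯₃ (s₁ - s₂)) i ^ 2 : ℝ) : ℂ) := by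
    rw [sld_fisher_of_exp_conj (trace_bloch s₁) hshift₁ hρ₁' hSLD₁,
      sld_fisher_of_exp_conj (trace_bloch s₂) hshift₂ hρ₂' hSLD₂,
      sld_fisher_of_exp_conj hB hshiftmix hρmix' hSLDmix, Complex.ofReal_mul, Complex.ofReal_mul,
      Complex.ofReal_sub, Complex.ofReal_one]
    linear_combination 2 * trace_lie_mul_self_convexity_defect m (bloch s₁) (bloch s₂) (lam : ℂ)
      + 2 * (lam : ℂ) * (1 - lam) * trace_lie_bloch_sub_mul_self n s₁ s₂
  have hdefect_re := congrArg Complex.re hdefect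
  simp only [Complex.sub_re, Complex.add_re, Complex.re_ofReal_mul, Complex.ofReal_re] at hdefect_re
  refine ⟨hdefect_re, ?_⟩
  rw [← sub_eq_zero, hdefect_re, mul_eq_zero, or_iff_right (mul_pos hlam.1 (sub_pos.2 hlam.2)).ne',
    sum_sq_cross_eq_zero_iff hn]

/-- For two single-qubit shift-parameter models `ρ_θ^j = e^{-iθ(n·σ)/2} ρ₀^j e^{iθ(n·σ)/2}` with
Bloch vectors `s₁, s₂`, the convexity defect of the SLD Fisher information of the mixture
`λρ_θ¹ + (1-λ)ρ_θ²` is `λ(1-λ)|n × (s₁ - s₂)|²`; in particular equality in the convexity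
inequality holds iff `s₁ - s₂` is parallel to `n`. -/
theorem sld_fisher_convexity_defect_qubit
    (n s₁ s₂ : Fin 3 → ℝ) (hn : ∑ i, n i ^ 2 = 1)
    (hs₁ : ∑ i, s₁ i ^ 2 < 1) (hs₂ : ∑ i, s₂ i ^ 2 < 1)
    (lam : ℝ) (hlam : lam ∈ Set.Ioo (0 : ℝ) 1)
    (ρ₁ ρ₂ ρmix : ℝ → Matrix (Fin 2) (Fin 2) ℂ)
    (hρ₁ : ∀ t : ℝ, ρ₁ t =
      NormedSpace.exp ((-(Complex.I * (t : ℂ)) / 2) • dotσ n) * bloch s₁ *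
      NormedSpace.exp (((Complex.I * (t : ℂ)) / 2) • dotσ n))
    (hρ₂ : ∀ t : ℝ, ρ₂ t =
      NormedSpace.exp ((-(Complex.I * (t : ℂ)) / 2) • dotσ n) * bloch s₂ *
      NormedSpace.exp (((Complex.I * (t : ℂ)) / 2) • dotσ n))
    (hmix : ∀ t : ℝ, ρmix t = (lam : ℂ) • ρ₁ t + ((1 - lam : ℝ) : ℂ) • ρ₂ t)
    (θ : ℝ) (ρ₁' ρ₂' ρmix' : Matrix (Fin 2) (Fin 2) ℂ)
    (hρ₁' : ∀ i j, HasDerivAt (fun t => ρ₁ t i j) (ρ₁' i j) θ)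
    (hρ₂' : ∀ i j, HasDerivAt (fun t => ρ₂ t i j) (ρ₂' i j) θ)
    (hρmix' : ∀ i j, HasDerivAt (fun t => ρmix t i j) (ρmix' i j) θ)
    (L₁ L₂ Lmix : Matrix (Fin 2) (Fin 2) ℂ)
    (hL₁ : L₁.IsHermitian) (hL₂ : L₂.IsHermitian) (hLmix : Lmix.IsHermitian)
    (hSLD₁ : ρ₁' = (1 / 2 : ℂ) • (ρ₁ θ * L₁ + L₁ * ρ₁ θ))
    (hSLD₂ : ρ₂' = (1 / 2 : ℂ) • (ρ₂ θ * L₂ + L₂ * ρ₂ θ))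
    (hSLDmix : ρmix' = (1 / 2 : ℂ) • (ρmix θ * Lmix + Lmix * ρmix θ)) :
    lam * ((L₁ * ρ₁').trace).re + (1 - lam) * ((L₂ * ρ₂').trace).re
        - ((Lmix * ρmix').trace).re
      = lam * (1 - lam) * ∑ i, (crossProduct n (s₁ - s₂)) i ^ 2 ∧
    (lam * ((L₁ * ρ₁').trace).re + (1 - lam) * ((L₂ * ρ₂').trace).re
        = ((Lmix * ρmix').trace).re ↔ ∃ c : ℝ, s₁ - s₂ = c • n) :=
  sld_fisher_convexity_defect_qubit_general n s₁ s₂ hn lam hlam ρ₁ ρ₂ ρmix hρ₁ hρ₂ hmix θ ρ₁' ρ₂'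
    ρmix' hρ₁' hρ₂' hρmix' L₁ L₂ Lmix hSLD₁ hSLD₂ hSLDmix
end
end

section
/- Let ρ_0 be the rank-2 state diag(λ, 1−λ, 0) on ℂ³ with λ ∈ (0,1), and let A be the Hermitian matrix with entries A₁₁ = A₂₂ = a, A₃₃ = b, A₁₃ = c̄, A₂₃ = d̄, A₁₂ = 0 (a,b ∈ ℝ, c,d ∈ ℂ). Then ρ_0 A ρ_0 = Ā ρ_0², where Ā = Tr(ρ_0 A) = a. Hence the saturation condition for the SLD Fisher information bound g = 4Δ_{ρ_0}A can hold for a mixed (non-pure) state. -/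
open Matrix
noncomputable section

/-- For the rank-2 state `ρ₀ = diag(l, 1-l, 0)` on `ℂ³` and the Hermitian matrix `A` with entries
`A₁₁ = A₂₂ = a`, `A₃₃ = b`, `A₁₃ = c̄`, `A₂₃ = d̄`, `A₁₂ = 0`, one has `ρ₀ A ρ₀ = Ā ρ₀²` with
`Ā = Tr(ρ₀A) = a`; hence the saturation condition for `g = 4Δ_{ρ₀}A` can hold for a mixed
(non-pure) state. -/
theorem sld_saturation_mixed_counterexample
    (l : ℝ) (hl : l ∈ Set.Ioo (0 : ℝ) 1) (a b : ℝ) (c d : ℂ)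
    (ρ₀ A : Matrix (Fin 3) (Fin 3) ℂ)
    (hρ₀ : ρ₀ = Matrix.diagonal ![(l : ℂ), ((1 - l : ℝ) : ℂ), 0])
    (hA : A = !![(a : ℂ), 0, starRingEnd ℂ c;
                 0, (a : ℂ), starRingEnd ℂ d;
                 c, d, (b : ℂ)]) :
    ρ₀ * A * ρ₀ = (ρ₀ * A).trace • (ρ₀ * ρ₀) ∧
    (ρ₀ * A).trace = (a : ℂ) ∧
    ρ₀ * ρ₀ ≠ ρ₀ := by
  obtain ⟨hl0, hl1⟩ := hl
  have htr : (ρ₀ * A).trace = (a : ℂ) := by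
    subst hρ₀ hA
    simp [Matrix.trace_fin_three, Matrix.mul_apply, Fin.sum_univ_three,
      Matrix.diagonal]
    ring
  refine ⟨?_, htr, ?_⟩
  · rw [htr]
    subst hρ₀ hA
    ext i j
    fin_cases i <;> fin_cases j <;>
      simp [Matrix.mul_apply, Fin.sum_univ_three, Matrix.diagonal] <;>
      push_cast <;> try ring
  · intro h
    have h00 := congrFun (congrFun h 0) 0
    subst hρ₀
    simp [Matrix.mul_apply, Fin.sum_univ_three, Matrix.diagonal] at h00
    have : (l : ℂ) * l = l := by
      simpa [Matrix.mul_apply, Fin.sum_univ_three] using h00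
    have hr : l * l = l := by exact_mod_cast this
    nlinarith
end
end

section
/- For the single-qubit transpose channel Γ_θ(ρ) = θρ + (1−θ)ρ^T with θ ∈ (0,1), the maximum over single-qubit density matrices ρ of the SLD Fisher information of the output family θ ↦ Γ_θ(ρ) equals 1/(θ(1−θ)), attained by the eigenstates of σ_y. -/
open Matrix
open scoped ComplexOrder
noncomputable section

/-- The single-qubit transpose channel `Γ_t(ρ) = tρ + (1-t)ρᵀ`. -/
def transpCh (t : ℝ) (ρ : Matrix (Fin 2) (Fin 2) ℂ) : Matrix (Fin 2) (Fin 2) ℂ :=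
  (t : ℂ) • ρ + ((1 - t : ℝ) : ℂ) • ρᵀ

/-!
For a 2 × 2 state `Γ` (trace one), Cayley–Hamilton solves the SLD equation `D = ½(ΓL + LΓ)` in
closed form, and the Fisher information `g = tr(LD)` satisfies
`g · det Γ = 2 det Γ · tr(D²) + tr(ΓD)²` (the matrix form of
`g (1 - |r|²) = |r'|² (1 - |r|²) + (r·r')²`).

For the transpose channel `D = ρ - ρᵀ` is antisymmetric, so everything is governed by
`c = ρ₀₁ - ρ₁₀`, whose square is `-s₂²` for the `y` Bloch component `s₂` of `ρ`; moreover
`det Γ = det ρ + θ(1-θ) s₂²`. The identity becomes `g · det Γ = 4 det Γ · s₂² + (2θ-1)² s₂⁴`, and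
`det Γ ≥ θ(1-θ) s₂²` yields `g ≤ s₂² / (θ(1-θ)) ≤ 1 / (θ(1-θ))`. The eigenstates of `σ_y` are
pure with `s₂² = 1`, so both inequalities are equalities there.
-/

open ComplexConjugate

namespace Matrix

section CommRing

variable {R : Type*} [CommRing R]

theorem mul_add_mul_fin_two_s14 (A B : Matrix (Fin 2) (Fin 2) R) :
    A * B + B * A =
      A.trace • B + B.trace • A + ((A * B).trace - A.trace * B.trace) • (1 : Matrix _ _ R) := by
  ext i j
  fin_cases i <;> fin_cases j <;>
    simp [trace_fin_two, mul_apply, Fin.sum_univ_two] <;> ring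

theorem trace_mul_self_fin_two (A : Matrix (Fin 2) (Fin 2) R) :
    (A * A).trace = A.trace ^ 2 - 2 * A.det := by
  simp only [trace_fin_two, det_fin_two, mul_apply, Fin.sum_univ_two]
  ring

theorem trace_mul_sub_transpose_fin_two (A B : Matrix (Fin 2) (Fin 2) R) :
    (A * (B - Bᵀ)).trace = (A 1 0 - A 0 1) * (B 0 1 - B 1 0) := by
  simp only [trace_fin_two, mul_apply, Fin.sum_univ_two, sub_apply, transpose_apply]
  ring

theorem trace_sub_transpose_mul_self_fin_two (A : Matrix (Fin 2) (Fin 2) R) :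
    ((A - Aᵀ) * (A - Aᵀ)).trace = -2 * (A 0 1 - A 1 0) ^ 2 := by
  rw [trace_mul_sub_transpose_fin_two]
  simp only [sub_apply, transpose_apply]
  ring

end CommRing

theorem trace_mul_mul_det_eq_of_eq_half_smul {K : Type*} [Field K] [NeZero (2 : K)]
    {Γ L D : Matrix (Fin 2) (Fin 2) K} (hΓ : Γ.trace = 1) (hD : D.trace = 0)
    (hsld : D = (1 / 2 : K) • (Γ * L + L * Γ)) :
    (L * D).trace * Γ.det = 2 * Γ.det * (D * D).trace + (Γ * D).trace ^ 2 := by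
  set l := L.trace
  have hΓL : (Γ * L).trace = 0 := by
    rw [hsld, trace_smul, trace_add, trace_mul_comm L, ← two_mul, smul_eq_mul,
      ← mul_assoc, one_div_mul_cancel two_ne_zero, one_mul] at hD
    exact hD
  have hL : L = (2 : K) • D + l • (1 - Γ) := by
    rw [hsld, mul_add_mul_fin_two_s14, hΓL, hΓ, smul_smul, mul_one_div_cancel two_ne_zero, one_smul]
    module
  have hl : l * Γ.det = -(Γ * D).trace := by
    have h := hΓL
    rw [hL, mul_add, mul_smul_comm, mul_smul_comm, mul_sub, mul_one, trace_add, trace_smul,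
      trace_smul, trace_sub, trace_mul_self_fin_two, hΓ, smul_eq_mul, smul_eq_mul] at h
    refine mul_left_cancel₀ (two_ne_zero (α := K)) ?_
    linear_combination h
  have hg : (L * D).trace = 2 * (D * D).trace - l * (Γ * D).trace := by
    rw [hL, add_mul, smul_mul_assoc, smul_mul_assoc, sub_mul, one_mul, trace_add, trace_smul,
      trace_smul, trace_sub, hD, smul_eq_mul, smul_eq_mul]
    ring
  rw [hg]
  linear_combination -(Γ * D).trace * hl

theorem IsHermitian.sq_apply_sub_apply_fin_two {A : Matrix (Fin 2) (Fin 2) ℂ}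
    (hA : A.IsHermitian) : (A 0 1 - A 1 0) ^ 2 = -((2 * (A 0 1).im) ^ 2 : ℝ) := by
  rw [← hA.apply 1 0, Complex.star_def, Complex.sub_conj]
  push_cast
  linear_combination (2 * ((A 0 1).im : ℂ)) ^ 2 * Complex.I_sq

theorem PosSemidef.sq_two_mul_im_apply_add_four_mul_det_le {A : Matrix (Fin 2) (Fin 2) ℂ}
    (hA : A.PosSemidef) (htr : A.trace = 1) : (2 * (A 0 1).im) ^ 2 + 4 * A.det.re ≤ 1 := by
  have h00 : (A 0 0).im = 0 := Complex.conj_eq_iff_im.1 (hA.isHermitian.apply 0 0)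
  have h11 : (A 1 1).im = 0 := Complex.conj_eq_iff_im.1 (hA.isHermitian.apply 1 1)
  have htr' := congrArg Complex.re htr
  rw [trace_fin_two, Complex.add_re, Complex.one_re] at htr'
  have hdet : A.det.re = (A 0 0).re * (A 1 1).re - ((A 0 1).re ^ 2 + (A 0 1).im ^ 2) := by
    rw [det_fin_two, ← hA.isHermitian.apply 1 0]
    simp only [Complex.sub_re, Complex.mul_re, Complex.star_def, Complex.conj_re,
      Complex.conj_im, h00, h11]
    ring
  nlinarith [sq_nonneg ((A 0 0).re - (A 1 1).re), sq_nonneg (A 0 1).re]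

theorem trace_vecMulVec_star {n : Type*} [Fintype n] (v : n → ℂ) :
    (vecMulVec v (star v)).trace = ((∑ i, ‖v i‖ ^ 2 : ℝ) : ℂ) := by
  simp [trace_vecMulVec, dotProduct, Complex.mul_conj']

end Matrix

theorem transpCh_apply (t : ℝ) (ρ : Matrix (Fin 2) (Fin 2) ℂ) (i j : Fin 2) :
    transpCh t ρ i j = t * ρ i j + (1 - t) * ρ j i := by
  simp [transpCh]

theorem hasDerivAt_transpCh_apply (ρ : Matrix (Fin 2) (Fin 2) ℂ) (t : ℝ) (i j : Fin 2) :
    HasDerivAt (fun t => transpCh t ρ i j) ((ρ - ρᵀ) i j) t := by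
  have hf : (fun s : ℝ => transpCh s ρ i j) = fun s : ℝ => (s : ℂ) * (ρ i j - ρ j i) + ρ j i := by
    funext s
    rw [transpCh_apply]
    ring
  rw [hf, Matrix.sub_apply, transpose_apply]
  simpa using ((hasDerivAt_id (t : ℂ)).comp_ofReal).mul_const (ρ i j - ρ j i) |>.add_const (ρ j i)

theorem eq_sub_transpose_of_hasDerivAt_transpCh {θ : ℝ} {ρ ρ' : Matrix (Fin 2) (Fin 2) ℂ}
    (hd : ∀ i j, HasDerivAt (fun t => transpCh t ρ i j) (ρ' i j) θ) : ρ' = ρ - ρᵀ :=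
  Matrix.ext fun i j => (hd i j).unique (hasDerivAt_transpCh_apply ρ θ i j)

theorem trace_transpCh (t : ℝ) (ρ : Matrix (Fin 2) (Fin 2) ℂ) :
    (transpCh t ρ).trace = ρ.trace := by
  simp only [transpCh, trace_add, trace_smul, trace_transpose, smul_eq_mul]
  push_cast
  ring

theorem det_transpCh (t : ℝ) (ρ : Matrix (Fin 2) (Fin 2) ℂ) :
    (transpCh t ρ).det = ρ.det - t * (1 - t) * (ρ 0 1 - ρ 1 0) ^ 2 := by
  simp only [det_fin_two, transpCh_apply]
  ring

theorem trace_transpCh_mul_sub_transpose (t : ℝ) (ρ : Matrix (Fin 2) (Fin 2) ℂ) :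
    (transpCh t ρ * (ρ - ρᵀ)).trace = -(2 * t - 1) * (ρ 0 1 - ρ 1 0) ^ 2 := by
  rw [trace_mul_sub_transpose_fin_two]
  simp only [transpCh_apply]
  ring

theorem trace_mul_mul_det_transpCh {t : ℝ} {ρ L : Matrix (Fin 2) (Fin 2) ℂ} (hρ : ρ.trace = 1)
    (hsld : ρ - ρᵀ = (1 / 2 : ℂ) • (transpCh t ρ * L + L * transpCh t ρ)) :
    (L * (ρ - ρᵀ)).trace * (ρ.det - t * (1 - t) * (ρ 0 1 - ρ 1 0) ^ 2) =
      -4 * (ρ.det - t * (1 - t) * (ρ 0 1 - ρ 1 0) ^ 2) * (ρ 0 1 - ρ 1 0) ^ 2 +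
        (2 * t - 1) ^ 2 * ((ρ 0 1 - ρ 1 0) ^ 2) ^ 2 := by
  have h := trace_mul_mul_det_eq_of_eq_half_smul ((trace_transpCh t ρ).trans hρ)
    (by rw [trace_sub, trace_transpose, sub_self]) hsld
  rw [det_transpCh, trace_sub_transpose_mul_self_fin_two, trace_transpCh_mul_sub_transpose] at h
  linear_combination h

/-- `d` plays `det ρ`, `e` plays `s₂²` and `d + θ(1-θ)e` is `det Γ`. -/
theorem le_one_div_of_fisher_identity {θ d e g : ℝ} (hθ : θ ∈ Set.Ioo (0 : ℝ) 1) (hd : 0 ≤ d)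
    (he : 0 ≤ e) (he1 : e ≤ 1) (hg : e = 0 → g = 0)
    (h : g * (d + θ * (1 - θ) * e) = 4 * (d + θ * (1 - θ) * e) * e + (2 * θ - 1) ^ 2 * e ^ 2) :
    g ≤ 1 / (θ * (1 - θ)) := by
  obtain ⟨hθ0, hθ1⟩ := hθ
  have hk : 0 < θ * (1 - θ) := mul_pos hθ0 (sub_pos.2 hθ1)
  rcases he.eq_or_lt with he0 | he0
  · rw [hg he0.symm]
    positivity
  set δ := d + θ * (1 - θ) * e
  have hδ : θ * (1 - θ) * e ≤ δ := le_add_of_nonneg_left hd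
  have hδ0 : 0 < δ := (mul_pos hk he0).trans_le hδ
  rw [le_div_iff₀ hk, ← mul_le_mul_iff_left₀ hδ0]
  calc g * (θ * (1 - θ)) * δ
      = θ * (1 - θ) * (4 * δ * e) + (2 * θ - 1) ^ 2 * e * (θ * (1 - θ) * e) := by
        linear_combination θ * (1 - θ) * h
    _ ≤ θ * (1 - θ) * (4 * δ * e) + (2 * θ - 1) ^ 2 * e * δ := by gcongr
    _ = δ * e := by ring
    _ ≤ 1 * δ := by nlinarith

theorem re_trace_mul_sub_transpose_le {θ : ℝ} (hθ : θ ∈ Set.Ioo (0 : ℝ) 1)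
    {ρ L : Matrix (Fin 2) (Fin 2) ℂ} (hρ : ρ.PosSemidef) (htr : ρ.trace = 1)
    (hsld : ρ - ρᵀ = (1 / 2 : ℂ) • (transpCh θ ρ * L + L * transpCh θ ρ)) :
    ((L * (ρ - ρᵀ)).trace).re ≤ 1 / (θ * (1 - θ)) := by
  obtain ⟨hd, hdet⟩ := Complex.nonneg_iff.1 hρ.det_nonneg
  set d := ρ.det.re
  set e := (2 * (ρ 0 1).im) ^ 2
  have h := trace_mul_mul_det_transpCh htr hsld
  rw [show ρ.det = d from Complex.ext rfl hdet.symm, hρ.isHermitian.sq_apply_sub_apply_fin_two] at h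
  have hreal : ((L * (ρ - ρᵀ)).trace * ((d + θ * (1 - θ) * e : ℝ) : ℂ)).re =
      ((4 * (d + θ * (1 - θ) * e) * e + (2 * θ - 1) ^ 2 * e ^ 2 : ℝ) : ℂ).re := by
    congr 1
    push_cast
    linear_combination h
  rw [Complex.re_mul_ofReal, Complex.ofReal_re] at hreal
  refine le_one_div_of_fisher_identity hθ hd (sq_nonneg _) ?_ ?_ hreal
  · linarith [hρ.sq_two_mul_im_apply_add_four_mul_det_le htr]
  · intro he
    have hc : ρ 0 1 - ρ 1 0 = 0 := by
      rw [← sq_eq_zero_iff, hρ.isHermitian.sq_apply_sub_apply_fin_two, he, Complex.ofReal_zero,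
        neg_zero]
    rw [trace_mul_sub_transpose_fin_two, hc, mul_zero, Complex.zero_re]

theorem σy_mul_self : σy * σy = 1 := by
  ext i j
  fin_cases i <;> fin_cases j <;> simp [σy, mul_apply]

theorem sq_eq_one_of_σy_mulVec_eq_smul {v : Fin 2 → ℂ} {a : ℂ} (hv : v ≠ 0)
    (h : σy *ᵥ v = a • v) : a ^ 2 = 1 := by
  have hv2 : (a ^ 2 - 1) • v = 0 := by
    rw [sub_smul, one_smul, sub_eq_zero, pow_two, mul_smul, ← h, ← mulVec_smul, ← h, mulVec_mulVec,
      σy_mul_self, one_mulVec]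
  exact sub_eq_zero.1 ((smul_eq_zero.1 hv2).resolve_right hv)

theorem vecMulVec_star_sub_apply_sq_of_σy {v : Fin 2 → ℂ} {a : ℝ} (hnorm : ∑ i, ‖v i‖ ^ 2 = 1)
    (h : σy *ᵥ v = (a : ℂ) • v) :
    (vecMulVec v (star v) 0 1 - vecMulVec v (star v) 1 0) ^ 2 = -1 := by
  have hv : v ≠ 0 := by
    rintro rfl
    simp at hnorm
  have h0 : -(Complex.I * v 1) = a * v 0 := by simpa [σy, mulVec, dotProduct] using congrFun h 0
  have h1 : Complex.I * v 0 = a * v 1 := by simpa [σy, mulVec, dotProduct] using congrFun h 1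
  have hN : v 0 * conj (v 0) + v 1 * conj (v 1) = 1 := by
    simpa [trace_vecMulVec, dotProduct, hnorm] using trace_vecMulVec_star v
  simp only [vecMulVec_apply, Pi.star_apply, Complex.star_def]
  -- `i c = v† σ_y v = a`
  have hc : Complex.I * (v 0 * conj (v 1) - v 1 * conj (v 0)) = a := by
    linear_combination conj (v 0) * h0 + conj (v 1) * h1 + a * hN
  linear_combination -(Complex.I * (v 0 * conj (v 1) - v 1 * conj (v 0)) + a) * hc -
    sq_eq_one_of_σy_mulVec_eq_smul hv h + (v 0 * conj (v 1) - v 1 * conj (v 0)) ^ 2 * Complex.I_sq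

theorem re_trace_mul_sub_transpose_eq_of_σy {θ : ℝ} (hθ : θ ∈ Set.Ioo (0 : ℝ) 1)
    {v : Fin 2 → ℂ} {a : ℝ} (hnorm : ∑ i, ‖v i‖ ^ 2 = 1) (hv : σy *ᵥ v = (a : ℂ) • v)
    {L : Matrix (Fin 2) (Fin 2) ℂ}
    (hsld : vecMulVec v (star v) - (vecMulVec v (star v))ᵀ = (1 / 2 : ℂ) •
      (transpCh θ (vecMulVec v (star v)) * L + L * transpCh θ (vecMulVec v (star v)))) :
    ((L * (vecMulVec v (star v) - (vecMulVec v (star v))ᵀ)).trace).re = 1 / (θ * (1 - θ)) := by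
  have hk : (θ : ℂ) * (1 - θ) ≠ 0 := by
    exact_mod_cast (mul_pos hθ.1 (sub_pos.2 hθ.2)).ne'
  have htr : (vecMulVec v (star v)).trace = 1 := by
    rw [trace_vecMulVec_star, hnorm, Complex.ofReal_one]
  have h := trace_mul_mul_det_transpCh htr hsld
  rw [det_vecMulVec, vecMulVec_star_sub_apply_sq_of_σy hnorm hv] at h
  have hg : (L * (vecMulVec v (star v) - (vecMulVec v (star v))ᵀ)).trace =
      ((1 / (θ * (1 - θ)) : ℝ) : ℂ) := by
    push_cast
    rw [eq_div_iff hk]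
    linear_combination h
  rw [hg, Complex.ofReal_re]

/-- For the transpose channel with `θ ∈ (0,1)`, the maximum over input density matrices of the
SLD Fisher information of the output family equals `1/(θ(1-θ))`, attained by the eigenstates of
`σ_y`. -/
theorem transpose_channel_fisher_optimal (θ : ℝ) (hθ : θ ∈ Set.Ioo (0 : ℝ) 1) :
    (∀ ρ : Matrix (Fin 2) (Fin 2) ℂ, ρ.PosSemidef → ρ.trace = 1 →
      ∀ ρ' : Matrix (Fin 2) (Fin 2) ℂ,
        (∀ i j, HasDerivAt (fun t => transpCh t ρ i j) (ρ' i j) θ) →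
        ∀ L : Matrix (Fin 2) (Fin 2) ℂ, L.IsHermitian →
          ρ' = (1 / 2 : ℂ) • (transpCh θ ρ * L + L * transpCh θ ρ) →
          ((L * ρ').trace).re ≤ 1 / (θ * (1 - θ))) ∧
    (∀ (v : Fin 2 → ℂ) (a : ℝ), (∑ i, ‖v i‖ ^ 2 = 1) →
      σy *ᵥ v = (a : ℂ) • v →
      ∀ ρ' : Matrix (Fin 2) (Fin 2) ℂ,
        (∀ i j, HasDerivAt (fun t => transpCh t (vecMulVec v (star v)) i j) (ρ' i j) θ) →
        ∀ L : Matrix (Fin 2) (Fin 2) ℂ, L.IsHermitian →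
          ρ' = (1 / 2 : ℂ) • (transpCh θ (vecMulVec v (star v)) * L +
            L * transpCh θ (vecMulVec v (star v))) →
          ((L * ρ').trace).re = 1 / (θ * (1 - θ))) := by
  refine ⟨fun ρ hρ htr ρ' hd L _ hsld => ?_, fun v a hnorm hv ρ' hd L _ hsld => ?_⟩
  · obtain rfl := eq_sub_transpose_of_hasDerivAt_transpCh hd
    exact re_trace_mul_sub_transpose_le hθ hρ htr hsld
  · obtain rfl := eq_sub_transpose_of_hasDerivAt_transpCh hd
    exact re_trace_mul_sub_transpose_eq_of_σy hθ hnorm hv hsld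
end
end

section
/- For any density matrices ρ¹_θ, ρ²_θ forming two smooth one-parameter families on a finite-dimensional Hilbert space and any λ ∈ [0,1], the SLD quantum Fisher information is convex: g_θ[λρ¹_θ + (1−λ)ρ²_θ] ≤ λ g_θ[ρ¹_θ] + (1−λ) g_θ[ρ²_θ]. -/
open Matrix
open scoped ComplexOrder
noncomputable section

lemma psd_trace_re_nonneg {d : ℕ} {M : Matrix (Fin d) (Fin d) ℂ}
    (hM : M.PosSemidef) : 0 ≤ (M.trace).re := by
  have h : ∀ i, 0 ≤ (M i i).re := by
    intro i
    have := hM.re_dotProduct_nonneg (Pi.single i 1)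
    simpa [dotProduct, mulVec, Pi.single_apply, Finset.sum_ite_eq] using this
  rw [Matrix.trace]
  simpa using Finset.sum_nonneg fun i _ => h i

lemma psd_herm_sq_trace_nonneg {d : ℕ} {P A : Matrix (Fin d) (Fin d) ℂ}
    (hP : P.PosSemidef) (hA : A.IsHermitian) : 0 ≤ ((P * A * A).trace).re := by
  have h : (Aᴴ * P * A).PosSemidef := hP.conjTranspose_mul_mul_same A
  have := psd_trace_re_nonneg h
  rw [Matrix.trace_mul_comm (Aᴴ * P) A, ← Matrix.mul_assoc, hA.eq] at this
  rwa [Matrix.trace_mul_comm (A * A) P, ← Matrix.mul_assoc] at this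

/-- cross trace identity from an SLD equation -/
lemma sld_cross {d : ℕ} {P L D : Matrix (Fin d) (Fin d) ℂ} (M : Matrix (Fin d) (Fin d) ℂ)
    (h : D = (1 / 2 : ℂ) • (P * L + L * P)) :
    (M * D).trace = (1 / 2 : ℂ) * ((P * L * M).trace + (P * M * L).trace) := by
  subst h
  rw [Matrix.mul_smul, Matrix.trace_smul, Matrix.mul_add, Matrix.trace_add, smul_eq_mul]
  congr 2
  · rw [Matrix.trace_mul_comm M (P * L)]
  · rw [← Matrix.mul_assoc M L P, Matrix.trace_mul_comm (M * L) P, ← Matrix.mul_assoc]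

/-- diagonal trace identity from an SLD equation -/
lemma sld_diag {d : ℕ} {P L D : Matrix (Fin d) (Fin d) ℂ}
    (h : D = (1 / 2 : ℂ) • (P * L + L * P)) :
    (L * D).trace = (P * L * L).trace := by
  rw [sld_cross L h]
  ring

/-- Convexity of the SLD quantum Fisher information: for smooth one-parameter families of density
matrices `ρ¹_θ, ρ²_θ` and `λ ∈ [0,1]`,
`g_θ[λρ¹_θ + (1-λ)ρ²_θ] ≤ λ g_θ[ρ¹_θ] + (1-λ) g_θ[ρ²_θ]`. -/
theorem sld_fisher_convex {d : ℕ}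
    (ρ₁ ρ₂ : ℝ → Matrix (Fin d) (Fin d) ℂ)
    (hdens₁ : ∀ t, (ρ₁ t).PosSemidef ∧ (ρ₁ t).trace = 1)
    (hdens₂ : ∀ t, (ρ₂ t).PosSemidef ∧ (ρ₂ t).trace = 1)
    (lam : ℝ) (hlam : lam ∈ Set.Icc (0 : ℝ) 1)
    (θ : ℝ) (ρ₁' ρ₂' : Matrix (Fin d) (Fin d) ℂ)
    (hρ₁' : ∀ i j, HasDerivAt (fun t => ρ₁ t i j) (ρ₁' i j) θ)
    (hρ₂' : ∀ i j, HasDerivAt (fun t => ρ₂ t i j) (ρ₂' i j) θ)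
    (L₁ L₂ Lmix : Matrix (Fin d) (Fin d) ℂ)
    (hL₁ : L₁.IsHermitian) (hL₂ : L₂.IsHermitian) (hLmix : Lmix.IsHermitian)
    (hSLD₁ : ρ₁' = (1 / 2 : ℂ) • (ρ₁ θ * L₁ + L₁ * ρ₁ θ))
    (hSLD₂ : ρ₂' = (1 / 2 : ℂ) • (ρ₂ θ * L₂ + L₂ * ρ₂ θ))
    (hSLDmix : (lam : ℂ) • ρ₁' + ((1 - lam : ℝ) : ℂ) • ρ₂'
      = (1 / 2 : ℂ) • (((lam : ℂ) • ρ₁ θ + ((1 - lam : ℝ) : ℂ) • ρ₂ θ) * Lmix +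
          Lmix * ((lam : ℂ) • ρ₁ θ + ((1 - lam : ℝ) : ℂ) • ρ₂ θ))) :
    ((Lmix * ((lam : ℂ) • ρ₁' + ((1 - lam : ℝ) : ℂ) • ρ₂')).trace).re
      ≤ lam * ((L₁ * ρ₁').trace).re + (1 - lam) * ((L₂ * ρ₂').trace).re := by
  obtain ⟨hlam0, hlam1⟩ := hlam
  have hμ0 : (0 : ℝ) ≤ 1 - lam := by linarith
  -- notation
  set a₁ : ℝ := ((L₁ * ρ₁').trace).re with ha₁
  set a₂ : ℝ := ((L₂ * ρ₂').trace).re with ha₂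
  set b₁ : ℝ := ((ρ₁ θ * Lmix * Lmix).trace).re with hb₁
  set b₂ : ℝ := ((ρ₂ θ * Lmix * Lmix).trace).re with hb₂
  set c₁ : ℝ := ((Lmix * ρ₁').trace).re with hc₁
  set c₂ : ℝ := ((Lmix * ρ₂').trace).re with hc₂
  -- the LHS splits linearly
  have hlin : ((Lmix * ((lam : ℂ) • ρ₁' + ((1 - lam : ℝ) : ℂ) • ρ₂')).trace)
      = (lam : ℂ) * (Lmix * ρ₁').trace + ((1 - lam : ℝ) : ℂ) * (Lmix * ρ₂').trace := by
    rw [Matrix.mul_add, Matrix.mul_smul, Matrix.mul_smul, Matrix.trace_add,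
      Matrix.trace_smul, Matrix.trace_smul, smul_eq_mul, smul_eq_mul]
  have hG1 : ((Lmix * ((lam : ℂ) • ρ₁' + ((1 - lam : ℝ) : ℂ) • ρ₂')).trace).re
      = lam * c₁ + (1 - lam) * c₂ := by
    rw [hlin, Complex.add_re, Complex.re_ofReal_mul, Complex.re_ofReal_mul]
  -- the LHS equals the mixed-state quadratic form
  have hG2 : ((Lmix * ((lam : ℂ) • ρ₁' + ((1 - lam : ℝ) : ℂ) • ρ₂')).trace).re
      = lam * b₁ + (1 - lam) * b₂ := by
    rw [sld_diag hSLDmix]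
    have : ((lam : ℂ) • ρ₁ θ + ((1 - lam : ℝ) : ℂ) • ρ₂ θ) * Lmix * Lmix
        = (lam : ℂ) • (ρ₁ θ * Lmix * Lmix) + ((1 - lam : ℝ) : ℂ) • (ρ₂ θ * Lmix * Lmix) := by
      rw [Matrix.add_mul, Matrix.add_mul, Matrix.smul_mul, Matrix.smul_mul,
        Matrix.smul_mul, Matrix.smul_mul]
    rw [this, Matrix.trace_add, Matrix.trace_smul, Matrix.trace_smul, smul_eq_mul, smul_eq_mul,
      Complex.add_re, Complex.re_ofReal_mul, Complex.re_ofReal_mul]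
  -- per-component Cauchy-Schwarz: 2 c ≤ a + b
  have key : ∀ (P L : Matrix (Fin d) (Fin d) ℂ) (D : Matrix (Fin d) (Fin d) ℂ),
      P.PosSemidef → L.IsHermitian →
      D = (1 / 2 : ℂ) • (P * L + L * P) →
      2 * ((Lmix * D).trace).re ≤ ((L * D).trace).re + ((P * Lmix * Lmix).trace).re := by
    intro P L D hP hL hD
    have hpos : 0 ≤ ((P * (L - Lmix) * (L - Lmix)).trace).re :=
      psd_herm_sq_trace_nonneg hP (hL.sub hLmix)
    have hexp : P * (L - Lmix) * (L - Lmix)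
        = P * L * L - P * L * Lmix - P * Lmix * L + P * Lmix * Lmix := by
      noncomm_ring
    rw [hexp, Matrix.trace_add, Matrix.trace_sub, Matrix.trace_sub,
      Complex.add_re, Complex.sub_re, Complex.sub_re] at hpos
    have hcross : ((Lmix * D).trace).re
        = (1 / 2 : ℝ) * (((P * L * Lmix).trace).re + ((P * Lmix * L).trace).re) := by
      rw [sld_cross Lmix hD]
      rw [show (1 / 2 : ℂ) = ((1 / 2 : ℝ) : ℂ) by norm_num, Complex.re_ofReal_mul,
        Complex.add_re]
    have hdiagL : ((L * D).trace).re = ((P * L * L).trace).re := by rw [sld_diag hD]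
    rw [hcross, hdiagL]
    linarith
  have h1 := key (ρ₁ θ) L₁ ρ₁' (hdens₁ θ).1 hL₁ hSLD₁
  have h2 := key (ρ₂ θ) L₂ ρ₂' (hdens₂ θ).1 hL₂ hSLD₂
  rw [← ha₁, ← hb₁, ← hc₁] at h1
  rw [← ha₂, ← hb₂, ← hc₂] at h2
  have h1' : lam * (2 * c₁) ≤ lam * (a₁ + b₁) := by
    exact mul_le_mul_of_nonneg_left h1 hlam0
  have h2' : (1 - lam) * (2 * c₂) ≤ (1 - lam) * (a₂ + b₂) := by
    exact mul_le_mul_of_nonneg_left h2 hμ0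
  linarith [hG1, hG2, h1', h2']
end
end

section
/- Separability criterion (main theorem): let Γ_θ be a one-parameter family of quantum channels on density matrices of a finite-dimensional Hilbert space H, and let g*_θ = max over density matrices ρ on H of g_θ[Γ_θ(ρ)]. Then for every N and every separable state ρ_sep = Σⱼ pⱼ ρⱼ^{(1)}⊗⋯⊗ρⱼ^{(N)} on H^{⊗N} (with pⱼ ≥ 0, Σpⱼ = 1), one has g_θ[Γ_θ^{⊗N}(ρ_sep)] ≤ N g*_θ, assuming the SLD Fisher information g_θ is convex in the state and additive over tensor products. -/
open Matrix
open scoped ComplexOrder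
noncomputable section

/-- The `N`-fold tensor product `ρ^{(1)} ⊗ ⋯ ⊗ ρ^{(N)}` of single-system matrices, as a matrix
on the `N`-fold tensor power (indexed by `Fin N → Fin d`). -/
def tensorN {d N : ℕ} (ρs : Fin N → Matrix (Fin d) (Fin d) ℂ) :
    Matrix (Fin N → Fin d) (Fin N → Fin d) ℂ :=
  Matrix.of fun i j => ∏ k, ρs k (i k) (j k)

/-- Separability criterion (main theorem): if `Γ_θ` is a one-parameter family of channels with
single-copy optimal SLD Fisher information bounded by `g*_θ`, then for the `N`-fold product
channel `Γ_θ^{⊗N}` and any separable input state `ρ_sep = Σⱼ pⱼ ρⱼ^{(1)}⊗⋯⊗ρⱼ^{(N)}`, the SLD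
Fisher information of the output family satisfies `g_θ[Γ_θ^{⊗N}(ρ_sep)] ≤ N g*_θ`.
Here the SLD Fisher information of the single-copy and `N`-copy output families is abstracted
by functionals `g1`, `gN` assumed convex in the state and additive over tensor products. -/
theorem separable_states_bounded_fisher {d N : ℕ}
    (Γ : ℝ → Matrix (Fin d) (Fin d) ℂ →ₗ[ℂ] Matrix (Fin d) (Fin d) ℂ)
    (ΓN : ℝ → Matrix (Fin N → Fin d) (Fin N → Fin d) ℂ
            →ₗ[ℂ] Matrix (Fin N → Fin d) (Fin N → Fin d) ℂ)
    (hΓN : ∀ (t : ℝ) (ρs : Fin N → Matrix (Fin d) (Fin d) ℂ),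
      ΓN t (tensorN ρs) = tensorN fun k => Γ t (ρs k))
    (g1 : (ℝ → Matrix (Fin d) (Fin d) ℂ) → ℝ)
    (gN : (ℝ → Matrix (Fin N → Fin d) (Fin N → Fin d) ℂ) → ℝ)
    (θ : ℝ) (gstar : ℝ)
    -- `g*_θ` is the maximum of the single-copy output Fisher information over input states:
    (hstar : IsGreatest
      {x : ℝ | ∃ ρ : Matrix (Fin d) (Fin d) ℂ, ρ.PosSemidef ∧ ρ.trace = 1 ∧
        x = g1 fun t => Γ t ρ} gstar)
    -- convexity of the Fisher information in the state:
    {ι : Type*} (s : Finset ι)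
    (hconv : ∀ (p : ι → ℝ) (σ : ι → ℝ → Matrix (Fin N → Fin d) (Fin N → Fin d) ℂ),
      (∀ j ∈ s, 0 ≤ p j) → (∑ j ∈ s, p j = 1) →
      gN (fun t => ∑ j ∈ s, ((p j : ℂ)) • σ j t) ≤ ∑ j ∈ s, p j * gN (σ j))
    -- additivity of the Fisher information over tensor products:
    (hadd : ∀ σs : Fin N → ℝ → Matrix (Fin d) (Fin d) ℂ,
      gN (fun t => tensorN fun k => σs k t) = ∑ k, g1 (σs k))
    -- a separable state:
    (p : ι → ℝ) (hp : ∀ j ∈ s, 0 ≤ p j) (hp1 : ∑ j ∈ s, p j = 1)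
    (ρs : ι → Fin N → Matrix (Fin d) (Fin d) ℂ)
    (hρs : ∀ j ∈ s, ∀ k, (ρs j k).PosSemidef ∧ (ρs j k).trace = 1)
    (ρsep : Matrix (Fin N → Fin d) (Fin N → Fin d) ℂ)
    (hsep : ρsep = ∑ j ∈ s, ((p j : ℂ)) • tensorN (ρs j)) :
    gN (fun t => ΓN t ρsep) ≤ N * gstar := by
  have key : (fun t => ΓN t ρsep)
      = fun t => ∑ j ∈ s, ((p j : ℂ)) • tensorN (fun k => Γ t (ρs j k)) := by
    funext t
    simp [hsep, map_sum, hΓN]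
  rw [key]
  calc gN (fun t => ∑ j ∈ s, ((p j : ℂ)) • tensorN (fun k => Γ t (ρs j k)))
      ≤ ∑ j ∈ s, p j * gN (fun t => tensorN (fun k => Γ t (ρs j k))) :=
        hconv p (fun j t => tensorN (fun k => Γ t (ρs j k))) hp hp1
    _ ≤ ∑ j ∈ s, p j * (N * gstar) := by
        refine Finset.sum_le_sum fun j hj => mul_le_mul_of_nonneg_left ?_ (hp j hj)
        rw [hadd (fun k t => Γ t (ρs j k))]
        calc (∑ k, g1 (fun t => Γ t (ρs j k))) ≤ ∑ _k : Fin N, gstar := by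
              refine Finset.sum_le_sum fun k _ => hstar.2 ?_
              exact ⟨ρs j k, (hρs j hj k).1, (hρs j hj k).2, rfl⟩
          _ = N * gstar := by simp [mul_comm]
    _ = N * gstar := by rw [← Finset.sum_mul, hp1, one_mul]
end
end
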